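/- Weak normalization of the simply-typed λ-calculus with sums: for every closed well-typed term ⊢ t : A, the μμ̃ configuration ⟨⟦t⟧ | α⟩ reduces to a normal configuration. -/

import Mathlib

mutual
/-- μμ̃ machine terms. -/
inductive MTm where
  | var : Nat → MTm
  | mu : MMach → MTm            -- μα.m, binds co-variable 0
  | muPair : MMach → MTm        -- μ(x·α).m, binds variable 0 and co-variable 0
  | injl : MTm → MTm
  | injr : MTm → MTm
/-- μμ̃ machine co-terms (contexts). -/
inductive MCo where
  | covar : Nat → MCo
  | cons : MTm → MCo → MCo      -- t·e
  | mutilde : MMach → MCo       -- μ̃x.m, binds variable 0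
  | case : MMach → MMach → MCo  -- μ̃[inj₁x₁.m₁ | inj₂x₂.m₂], each branch binds variable 0
/-- μμ̃ machine configurations ⟨t | e⟩. -/
inductive MMach where
  | conf : MTm → MCo → MMach
end

/-- Lift a renaming under a binder. -/
def liftN (f : Nat → Nat) : Nat → Nat
  | 0 => 0
  | n + 1 => f n + 1

mutual
/-- Simultaneous renaming of variables (ft) and co-variables (fc). -/
def MTm.rename (ft fc : Nat → Nat) : MTm → MTm
  | .var n => .var (ft n)
  | .mu m => .mu (MMach.rename ft (liftN fc) m)
  | .muPair m => .muPair (MMach.rename (liftN ft) (liftN fc) m)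
  | .injl t => .injl (MTm.rename ft fc t)
  | .injr t => .injr (MTm.rename ft fc t)
def MCo.rename (ft fc : Nat → Nat) : MCo → MCo
  | .covar n => .covar (fc n)
  | .cons t e => .cons (MTm.rename ft fc t) (MCo.rename ft fc e)
  | .mutilde m => .mutilde (MMach.rename (liftN ft) fc m)
  | .case m₁ m₂ => .case (MMach.rename (liftN ft) fc m₁) (MMach.rename (liftN ft) fc m₂)
def MMach.rename (ft fc : Nat → Nat) : MMach → MMach
  | .conf t e => .conf (MTm.rename ft fc t) (MCo.rename ft fc e)
end

/-- Lift a substitution under a variable binder. -/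
def upT (σt : Nat → MTm) (σc : Nat → MCo) : (Nat → MTm) × (Nat → MCo) :=
  (fun n => match n with
    | 0 => .var 0
    | n + 1 => MTm.rename Nat.succ id (σt n),
   fun n => MCo.rename Nat.succ id (σc n))

/-- Lift a substitution under a co-variable binder. -/
def upC (σt : Nat → MTm) (σc : Nat → MCo) : (Nat → MTm) × (Nat → MCo) :=
  (fun n => MTm.rename id Nat.succ (σt n),
   fun n => match n with
    | 0 => .covar 0
    | n + 1 => MCo.rename id Nat.succ (σc n))

mutual
/-- Simultaneous substitution of terms for variables and co-terms for co-variables. -/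
def MTm.subst (σt : Nat → MTm) (σc : Nat → MCo) : MTm → MTm
  | .var n => σt n
  | .mu m => .mu (MMach.subst (upC σt σc).1 (upC σt σc).2 m)
  | .muPair m =>
      .muPair (MMach.subst (upT (upC σt σc).1 (upC σt σc).2).1
                           (upT (upC σt σc).1 (upC σt σc).2).2 m)
  | .injl t => .injl (MTm.subst σt σc t)
  | .injr t => .injr (MTm.subst σt σc t)
def MCo.subst (σt : Nat → MTm) (σc : Nat → MCo) : MCo → MCo
  | .covar n => σc n
  | .cons t e => .cons (MTm.subst σt σc t) (MCo.subst σt σc e)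
  | .mutilde m => .mutilde (MMach.subst (upT σt σc).1 (upT σt σc).2 m)
  | .case m₁ m₂ => .case (MMach.subst (upT σt σc).1 (upT σt σc).2 m₁)
                         (MMach.subst (upT σt σc).1 (upT σt σc).2 m₂)
def MMach.subst (σt : Nat → MTm) (σc : Nat → MCo) : MMach → MMach
  | .conf t e => .conf (MTm.subst σt σc t) (MCo.subst σt σc e)
end

/-- m[e/α] : substitute co-term `e` for co-variable 0. -/
def MMach.substCo (m : MMach) (e : MCo) : MMach :=
  MMach.subst MTm.var (fun n => match n with | 0 => e | n + 1 => .covar n) m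

/-- m[t/x] : substitute term `t` for variable 0. -/
def MMach.substTm (m : MMach) (t : MTm) : MMach :=
  MMach.subst (fun n => match n with | 0 => t | n + 1 => .var n) MCo.covar m

/-- m[t/x, e/α] : substitute both a term and a co-term. -/
def MMach.substTmCo (m : MMach) (t : MTm) (e : MCo) : MMach :=
  MMach.subst (fun n => match n with | 0 => t | n + 1 => .var n)
              (fun n => match n with | 0 => e | n + 1 => .covar n) m

mutual
/-- Reduction of μμ̃ terms (congruence). -/
inductive StepT : MTm → MTm → Prop
  | mu {m m'} : StepM m m' → StepT (.mu m) (.mu m')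
  | muPair {m m'} : StepM m m' → StepT (.muPair m) (.muPair m')
  | injl {t t'} : StepT t t' → StepT (.injl t) (.injl t')
  | injr {t t'} : StepT t t' → StepT (.injr t) (.injr t')
/-- Reduction of μμ̃ co-terms (congruence). -/
inductive StepC : MCo → MCo → Prop
  | consl {t t'} (e) : StepT t t' → StepC (.cons t e) (.cons t' e)
  | consr (t) {e e'} : StepC e e' → StepC (.cons t e) (.cons t e')
  | mutilde {m m'} : StepM m m' → StepC (.mutilde m) (.mutilde m')
  | casel {m₁ m₁'} (m₂) : StepM m₁ m₁' → StepC (.case m₁ m₂) (.case m₁' m₂)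
  | caser (m₁) {m₂ m₂'} : StepM m₂ m₂' → StepC (.case m₁ m₂) (.case m₁ m₂')
/-- Reduction of μμ̃ machine configurations. -/
inductive StepM : MMach → MMach → Prop
  | mu (m : MMach) (e : MCo) : StepM (.conf (.mu m) e) (m.substCo e)
  | mutilde (t : MTm) (m : MMach) : StepM (.conf t (.mutilde m)) (m.substTm t)
  | muPair (m : MMach) (u : MTm) (e : MCo) :
      StepM (.conf (.muPair m) (.cons u e)) (m.substTmCo u e)
  | casel (t : MTm) (m₁ m₂ : MMach) :
      StepM (.conf (.injl t) (.case m₁ m₂)) (m₁.substTm t)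
  | caser (t : MTm) (m₁ m₂ : MMach) :
      StepM (.conf (.injr t) (.case m₁ m₂)) (m₂.substTm t)
  | congT {t t'} (e) : StepT t t' → StepM (.conf t e) (.conf t' e)
  | congC (t) {e e'} : StepC e e' → StepM (.conf t e) (.conf t e')
end

/-- Source λ-calculus with sums (de Bruijn). In `case t u₁ u₂` each branch binds
variable 0. -/
inductive LTm where
  | var : Nat → LTm
  | lam : LTm → LTm
  | app : LTm → LTm → LTm
  | injl : LTm → LTm
  | injr : LTm → LTm
  | case : LTm → LTm → LTm → LTm

/-- Compilation of λ-terms with sums into the μμ̃ machine (call-by-name). -/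
def transl : LTm → MTm
  | .var n => .var n
  | .lam t => .muPair (.conf (transl t) (.covar 0))
  | .app t u => .mu (.conf (transl t) (.cons (transl u) (.covar 0)))
  | .injl t => .injl (transl t)
  | .injr t => .injr (transl t)
  | .case t u₁ u₂ =>
      .mu (.conf (transl t)
        (.case (.conf (transl u₁) (.covar 0)) (.conf (transl u₂) (.covar 0))))

/-- Simple types: a (positive) base type, function types and sum types. -/
inductive Ty where
  | base : Ty
  | arrow : Ty → Ty → Ty
  | sum : Ty → Ty → Ty

/-- Typing judgment of the simply-typed λ-calculus with sums. -/
inductive HasTy : List Ty → LTm → Ty → Prop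
  | var {Γ n A} : Γ[n]? = some A → HasTy Γ (.var n) A
  | lam {Γ t A B} : HasTy (A :: Γ) t B → HasTy Γ (.lam t) (.arrow A B)
  | app {Γ t u A B} : HasTy Γ t (.arrow A B) → HasTy Γ u A → HasTy Γ (.app t u) B
  | injl {Γ t A B} : HasTy Γ t A → HasTy Γ (.injl t) (.sum A B)
  | injr {Γ t A B} : HasTy Γ t B → HasTy Γ (.injr t) (.sum A B)
  | case {Γ t u₁ u₂ A B C} : HasTy Γ t (.sum A B) → HasTy (A :: Γ) u₁ C →
      HasTy (B :: Γ) u₂ C → HasTy Γ (.case t u₁ u₂) C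


/-!
Classical realizability with the pole of weakly normalizing configurations. A type `A` is
interpreted by the co-terms refuting it (`Falsity A`, always containing the top-level
co-variable `α`) and the terms whose every renaming forms a pole configuration with each of
them (`Truth A`). The pole is closed under head anti-reduction, and also under undoing
renamings, since every step out of a renamed configuration is the renaming of a step. Variables
are true at every type, because every falsity witness reduces to a normal co-term that cannot
bind a variable; this is what lets the bodies of abstractions and case branches be normalized.
The adequacy lemma then shows that the translation of a typed term, under a substitution of
true terms, is true, and for a closed term this puts `⟨⟦t⟧ | α⟩` in the pole.
-/

theorem liftN_id : liftN id = id := by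
  funext n; cases n <;> rfl

theorem liftN_comp (f g : Nat → Nat) : liftN (g ∘ f) = liftN g ∘ liftN f := by
  funext n; cases n <;> rfl

mutual
theorem MTm.rename_rename : ∀ (t : MTm) (f g f' g' : Nat → Nat),
    (t.rename f g).rename f' g' = t.rename (f' ∘ f) (g' ∘ g)
  | .var _, _, _, _, _ => rfl
  | .mu m, _, _, _, _ => by simp [MTm.rename, MMach.rename_rename m, liftN_comp]
  | .muPair m, _, _, _, _ => by simp [MTm.rename, MMach.rename_rename m, liftN_comp]
  | .injl t, _, _, _, _ => by simp [MTm.rename, MTm.rename_rename t]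
  | .injr t, _, _, _, _ => by simp [MTm.rename, MTm.rename_rename t]
theorem MCo.rename_rename : ∀ (e : MCo) (f g f' g' : Nat → Nat),
    (e.rename f g).rename f' g' = e.rename (f' ∘ f) (g' ∘ g)
  | .covar _, _, _, _, _ => rfl
  | .cons t e, _, _, _, _ => by simp [MCo.rename, MTm.rename_rename t, MCo.rename_rename e]
  | .mutilde m, _, _, _, _ => by simp [MCo.rename, MMach.rename_rename m, liftN_comp]
  | .case m₁ m₂, _, _, _, _ => by
      simp [MCo.rename, MMach.rename_rename m₁, MMach.rename_rename m₂, liftN_comp]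
theorem MMach.rename_rename : ∀ (m : MMach) (f g f' g' : Nat → Nat),
    (m.rename f g).rename f' g' = m.rename (f' ∘ f) (g' ∘ g)
  | .conf t e, _, _, _, _ => by simp [MMach.rename, MTm.rename_rename t, MCo.rename_rename e]
end

mutual
theorem MTm.rename_id : ∀ t : MTm, t.rename id id = t
  | .var _ => rfl
  | .mu m => by simp [MTm.rename, liftN_id, MMach.rename_id m]
  | .muPair m => by simp [MTm.rename, liftN_id, MMach.rename_id m]
  | .injl t => by simp [MTm.rename, MTm.rename_id t]
  | .injr t => by simp [MTm.rename, MTm.rename_id t]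
theorem MCo.rename_id : ∀ e : MCo, e.rename id id = e
  | .covar _ => rfl
  | .cons t e => by simp [MCo.rename, MTm.rename_id t, MCo.rename_id e]
  | .mutilde m => by simp [MCo.rename, liftN_id, MMach.rename_id m]
  | .case m₁ m₂ => by simp [MCo.rename, liftN_id, MMach.rename_id m₁, MMach.rename_id m₂]
theorem MMach.rename_id : ∀ m : MMach, m.rename id id = m
  | .conf t e => by simp [MMach.rename, MTm.rename_id t, MCo.rename_id e]
end

section

variable (σt : Nat → MTm) (σc : Nat → MCo) (f g : Nat → Nat)

theorem upT_comp :
    upT (σt ∘ f) (σc ∘ g) = ((upT σt σc).1 ∘ liftN f, (upT σt σc).2 ∘ g) := by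
  refine Prod.ext ?_ rfl
  funext n; cases n <;> rfl

theorem upC_comp :
    upC (σt ∘ f) (σc ∘ g) = ((upC σt σc).1 ∘ f, (upC σt σc).2 ∘ liftN g) := by
  refine Prod.ext rfl ?_
  funext n; cases n <;> rfl

theorem upT_rename :
    upT (fun n => (σt n).rename f g) (fun n => (σc n).rename f g) =
      (fun n => ((upT σt σc).1 n).rename (liftN f) g,
       fun n => ((upT σt σc).2 n).rename (liftN f) g) := by
  refine Prod.ext (funext fun n => ?_) (funext fun n => ?_) <;> cases n <;>
    simp [upT, liftN, MTm.rename, Function.comp_def, MTm.rename_rename, MCo.rename_rename]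

theorem upC_rename :
    upC (fun n => (σt n).rename f g) (fun n => (σc n).rename f g) =
      (fun n => ((upC σt σc).1 n).rename f (liftN g),
       fun n => ((upC σt σc).2 n).rename f (liftN g)) := by
  refine Prod.ext (funext fun n => ?_) (funext fun n => ?_) <;> cases n <;>
    simp [upC, liftN, MCo.rename, Function.comp_def, MTm.rename_rename, MCo.rename_rename]

theorem upT_var :
    upT (fun n => .var (f n)) (fun n => .covar (g n)) =
      (fun n => .var (liftN f n), fun n => .covar (g n)) := by
  refine Prod.ext ?_ rfl
  funext n; cases n <;> rfl

theorem upC_var :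
    upC (fun n => .var (f n)) (fun n => .covar (g n)) =
      (fun n => .var (f n), fun n => .covar (liftN g n)) := by
  refine Prod.ext rfl ?_
  funext n; cases n <;> rfl

end

mutual
theorem MTm.subst_rename :
    ∀ (t : MTm) (f g : Nat → Nat) (σt : Nat → MTm) (σc : Nat → MCo),
    (t.rename f g).subst σt σc = t.subst (σt ∘ f) (σc ∘ g)
  | .var _, _, _, _, _ => rfl
  | .mu m, _, _, _, _ => by simp [MTm.rename, MTm.subst, MMach.subst_rename m, upC_comp]
  | .muPair m, _, _, _, _ => by
      simp [MTm.rename, MTm.subst, MMach.subst_rename m, upC_comp, upT_comp]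
  | .injl t, _, _, _, _ => by simp [MTm.rename, MTm.subst, MTm.subst_rename t]
  | .injr t, _, _, _, _ => by simp [MTm.rename, MTm.subst, MTm.subst_rename t]
theorem MCo.subst_rename :
    ∀ (e : MCo) (f g : Nat → Nat) (σt : Nat → MTm) (σc : Nat → MCo),
    (e.rename f g).subst σt σc = e.subst (σt ∘ f) (σc ∘ g)
  | .covar _, _, _, _, _ => rfl
  | .cons t e, _, _, _, _ => by
      simp [MCo.rename, MCo.subst, MTm.subst_rename t, MCo.subst_rename e]
  | .mutilde m, _, _, _, _ => by simp [MCo.rename, MCo.subst, MMach.subst_rename m, upT_comp]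
  | .case m₁ m₂, _, _, _, _ => by
      simp [MCo.rename, MCo.subst, MMach.subst_rename m₁, MMach.subst_rename m₂, upT_comp]
theorem MMach.subst_rename :
    ∀ (m : MMach) (f g : Nat → Nat) (σt : Nat → MTm) (σc : Nat → MCo),
    (m.rename f g).subst σt σc = m.subst (σt ∘ f) (σc ∘ g)
  | .conf t e, _, _, _, _ => by
      simp [MMach.rename, MMach.subst, MTm.subst_rename t, MCo.subst_rename e]
end

mutual
theorem MTm.rename_subst :
    ∀ (t : MTm) (σt : Nat → MTm) (σc : Nat → MCo) (f g : Nat → Nat),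
    (t.subst σt σc).rename f g
      = t.subst (fun n => (σt n).rename f g) (fun n => (σc n).rename f g)
  | .var _, _, _, _, _ => rfl
  | .mu m, _, _, _, _ => by simp only [MTm.subst, MTm.rename, MMach.rename_subst m, upC_rename]
  | .muPair m, _, _, _, _ => by
      simp only [MTm.subst, MTm.rename, MMach.rename_subst m, upC_rename, upT_rename]
  | .injl t, _, _, _, _ => by simp [MTm.subst, MTm.rename, MTm.rename_subst t]
  | .injr t, _, _, _, _ => by simp [MTm.subst, MTm.rename, MTm.rename_subst t]
theorem MCo.rename_subst :
    ∀ (e : MCo) (σt : Nat → MTm) (σc : Nat → MCo) (f g : Nat → Nat),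
    (e.subst σt σc).rename f g
      = e.subst (fun n => (σt n).rename f g) (fun n => (σc n).rename f g)
  | .covar _, _, _, _, _ => rfl
  | .cons t e, _, _, _, _ => by
      simp [MCo.subst, MCo.rename, MTm.rename_subst t, MCo.rename_subst e]
  | .mutilde m, _, _, _, _ => by
      simp only [MCo.subst, MCo.rename, MMach.rename_subst m, upT_rename]
  | .case m₁ m₂, _, _, _, _ => by
      simp only [MCo.subst, MCo.rename, MMach.rename_subst m₁, MMach.rename_subst m₂,
        upT_rename]
theorem MMach.rename_subst :
    ∀ (m : MMach) (σt : Nat → MTm) (σc : Nat → MCo) (f g : Nat → Nat),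
    (m.subst σt σc).rename f g
      = m.subst (fun n => (σt n).rename f g) (fun n => (σc n).rename f g)
  | .conf t e, _, _, _, _ => by
      simp [MMach.subst, MMach.rename, MTm.rename_subst t, MCo.rename_subst e]
end

section

variable (σt τt : Nat → MTm) (σc τc : Nat → MCo)

theorem upT_subst :
    upT (fun n => (σt n).subst τt τc) (fun n => (σc n).subst τt τc) =
      (fun n => ((upT σt σc).1 n).subst (upT τt τc).1 (upT τt τc).2,
       fun n => ((upT σt σc).2 n).subst (upT τt τc).1 (upT τt τc).2) := by
  refine Prod.ext (funext fun n => ?_) (funext fun n => ?_) <;> cases n <;>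
    simp [upT, MTm.subst, Function.comp_def, MTm.rename_subst, MCo.rename_subst, MTm.subst_rename,
      MCo.subst_rename]

theorem upC_subst :
    upC (fun n => (σt n).subst τt τc) (fun n => (σc n).subst τt τc) =
      (fun n => ((upC σt σc).1 n).subst (upC τt τc).1 (upC τt τc).2,
       fun n => ((upC σt σc).2 n).subst (upC τt τc).1 (upC τt τc).2) := by
  refine Prod.ext (funext fun n => ?_) (funext fun n => ?_) <;> cases n <;>
    simp [upC, MCo.subst, Function.comp_def, MTm.rename_subst, MCo.rename_subst, MTm.subst_rename,
      MCo.subst_rename]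

end

mutual
theorem MTm.subst_subst : ∀ (t : MTm) (σt τt : Nat → MTm) (σc τc : Nat → MCo),
    (t.subst σt σc).subst τt τc
      = t.subst (fun n => (σt n).subst τt τc) (fun n => (σc n).subst τt τc)
  | .var _, _, _, _, _ => rfl
  | .mu m, _, _, _, _ => by simp only [MTm.subst, MMach.subst_subst m, upC_subst]
  | .muPair m, _, _, _, _ => by simp only [MTm.subst, MMach.subst_subst m, upC_subst, upT_subst]
  | .injl t, _, _, _, _ => by simp [MTm.subst, MTm.subst_subst t]
  | .injr t, _, _, _, _ => by simp [MTm.subst, MTm.subst_subst t]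
theorem MCo.subst_subst : ∀ (e : MCo) (σt τt : Nat → MTm) (σc τc : Nat → MCo),
    (e.subst σt σc).subst τt τc
      = e.subst (fun n => (σt n).subst τt τc) (fun n => (σc n).subst τt τc)
  | .covar _, _, _, _, _ => rfl
  | .cons t e, _, _, _, _ => by simp [MCo.subst, MTm.subst_subst t, MCo.subst_subst e]
  | .mutilde m, _, _, _, _ => by simp only [MCo.subst, MMach.subst_subst m, upT_subst]
  | .case m₁ m₂, _, _, _, _ => by
      simp only [MCo.subst, MMach.subst_subst m₁, MMach.subst_subst m₂, upT_subst]
theorem MMach.subst_subst : ∀ (m : MMach) (σt τt : Nat → MTm) (σc τc : Nat → MCo),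
    (m.subst σt σc).subst τt τc
      = m.subst (fun n => (σt n).subst τt τc) (fun n => (σc n).subst τt τc)
  | .conf t e, _, _, _, _ => by simp [MMach.subst, MTm.subst_subst t, MCo.subst_subst e]
end

mutual
theorem MTm.subst_var_eq_rename : ∀ (t : MTm) (f g : Nat → Nat),
    t.subst (fun n => .var (f n)) (fun n => .covar (g n)) = t.rename f g
  | .var _, _, _ => rfl
  | .mu m, _, _ => by simp only [MTm.subst, MTm.rename, upC_var, MMach.subst_var_eq_rename m]
  | .muPair m, _, _ => by
      simp only [MTm.subst, MTm.rename, upC_var, upT_var, MMach.subst_var_eq_rename m]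
  | .injl t, _, _ => by simp [MTm.subst, MTm.rename, MTm.subst_var_eq_rename t]
  | .injr t, _, _ => by simp [MTm.subst, MTm.rename, MTm.subst_var_eq_rename t]
theorem MCo.subst_var_eq_rename : ∀ (e : MCo) (f g : Nat → Nat),
    e.subst (fun n => .var (f n)) (fun n => .covar (g n)) = e.rename f g
  | .covar _, _, _ => rfl
  | .cons t e, _, _ => by
      simp [MCo.subst, MCo.rename, MTm.subst_var_eq_rename t, MCo.subst_var_eq_rename e]
  | .mutilde m, _, _ => by simp only [MCo.subst, MCo.rename, upT_var, MMach.subst_var_eq_rename m]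
  | .case m₁ m₂, _, _ => by
      simp only [MCo.subst, MCo.rename, upT_var, MMach.subst_var_eq_rename m₁,
        MMach.subst_var_eq_rename m₂]
theorem MMach.subst_var_eq_rename : ∀ (m : MMach) (f g : Nat → Nat),
    m.subst (fun n => .var (f n)) (fun n => .covar (g n)) = m.rename f g
  | .conf t e, _, _ => by
      simp [MMach.subst, MMach.rename, MTm.subst_var_eq_rename t, MCo.subst_var_eq_rename e]
end

theorem MTm.subst_var (t : MTm) : t.subst .var .covar = t :=
  (t.subst_var_eq_rename id id).trans t.rename_id

theorem MCo.subst_var (e : MCo) : e.subst .var .covar = e :=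
  (e.subst_var_eq_rename id id).trans e.rename_id

def consT (u : MTm) (σt : Nat → MTm) : Nat → MTm
  | 0 => u
  | n + 1 => σt n

def consC (e : MCo) (σc : Nat → MCo) : Nat → MCo
  | 0 => e
  | n + 1 => σc n

namespace MMach

variable (m : MMach) (u : MTm) (e : MCo)

theorem rename_substCo (f g : Nat → Nat) :
    (m.substCo e).rename f g = (m.rename f (liftN g)).substCo (e.rename f g) := by
  unfold substCo
  rw [rename_subst, subst_rename]
  congr 1; funext n; cases n <;> rfl

theorem rename_substTm (f g : Nat → Nat) :
    (m.substTm u).rename f g = (m.rename (liftN f) g).substTm (u.rename f g) := by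
  unfold substTm
  rw [rename_subst, subst_rename]
  congr 1; funext n; cases n <;> rfl

theorem rename_substTmCo (f g : Nat → Nat) :
    (m.substTmCo u e).rename f g
      = (m.rename (liftN f) (liftN g)).substTmCo (u.rename f g) (e.rename f g) := by
  unfold substTmCo
  rw [rename_subst, subst_rename]
  congr 1 <;> funext n <;> cases n <;> rfl

variable (σt : Nat → MTm) (σc : Nat → MCo)

theorem substCo_upC :
    (m.subst (upC σt σc).1 (upC σt σc).2).substCo e = m.subst σt (consC e σc) := by
  unfold substCo
  rw [subst_subst]
  congr 1 <;> funext n <;> cases n <;>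
    simp [upC, consC, MCo.subst, MTm.subst_rename, MCo.subst_rename, Function.comp_def,
      MTm.subst_var, MCo.subst_var]

theorem substTm_upT :
    (m.subst (upT σt σc).1 (upT σt σc).2).substTm u = m.subst (consT u σt) σc := by
  unfold substTm
  rw [subst_subst]
  congr 1 <;> funext n <;> cases n <;>
    simp [upT, consT, MTm.subst, MTm.subst_rename, MCo.subst_rename, Function.comp_def,
      MTm.subst_var, MCo.subst_var]

theorem substTmCo_upT_upC :
    (m.subst (upT (upC σt σc).1 (upC σt σc).2).1
             (upT (upC σt σc).1 (upC σt σc).2).2).substTmCo u e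
      = m.subst (consT u σt) (consC e σc) := by
  unfold substTmCo
  rw [subst_subst]
  congr 1 <;> funext n <;> cases n <;>
    simp [upT, upC, consT, consC, MTm.subst, MCo.subst, MTm.subst_rename, MCo.subst_rename,
      Function.comp_def, MTm.subst_var, MCo.subst_var]

theorem substTm_var_zero : m.substTm (.var 0) = m.rename Nat.pred id := by
  unfold substTm
  rw [← subst_var_eq_rename]
  congr 1; funext n; cases n <;> rfl

theorem substCo_covar (k : Nat) :
    m.substCo (.covar k) = m.rename id (fun n => match n with | 0 => k | n + 1 => n) := by
  unfold substCo
  rw [← subst_var_eq_rename]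
  congr 1; funext n; cases n <;> rfl

end MMach

mutual
theorem StepT.rename : ∀ {t t' : MTm}, StepT t t' →
    ∀ f g : Nat → Nat, StepT (t.rename f g) (t'.rename f g)
  | _, _, .mu h, f, g => .mu (StepM.rename h f (liftN g))
  | _, _, .muPair h, f, g => .muPair (StepM.rename h (liftN f) (liftN g))
  | _, _, .injl h, f, g => .injl (StepT.rename h f g)
  | _, _, .injr h, f, g => .injr (StepT.rename h f g)
theorem StepC.rename : ∀ {e e' : MCo}, StepC e e' →
    ∀ f g : Nat → Nat, StepC (e.rename f g) (e'.rename f g)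
  | _, _, .consl _ h, f, g => .consl _ (StepT.rename h f g)
  | _, _, .consr _ h, f, g => .consr _ (StepC.rename h f g)
  | _, _, .mutilde h, f, g => .mutilde (StepM.rename h (liftN f) g)
  | _, _, .casel _ h, f, g => .casel _ (StepM.rename h (liftN f) g)
  | _, _, .caser _ h, f, g => .caser _ (StepM.rename h (liftN f) g)
theorem StepM.rename : ∀ {m m' : MMach}, StepM m m' →
    ∀ f g : Nat → Nat, StepM (m.rename f g) (m'.rename f g)
  | _, _, .mu m e, f, g => by rw [MMach.rename_substCo]; exact .mu _ _
  | _, _, .mutilde t m, f, g => by rw [MMach.rename_substTm]; exact .mutilde _ _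
  | _, _, .muPair m u e, f, g => by rw [MMach.rename_substTmCo]; exact .muPair _ _ _
  | _, _, .casel t m₁ m₂, f, g => by rw [MMach.rename_substTm]; exact .casel _ _ _
  | _, _, .caser t m₁ m₂, f, g => by rw [MMach.rename_substTm]; exact .caser _ _ _
  | _, _, .congT _ h, f, g => .congT _ (StepT.rename h f g)
  | _, _, .congC _ h, f, g => .congC _ (StepC.rename h f g)
end

mutual
theorem StepT.exists_of_rename : ∀ (t : MTm) {f g : Nat → Nat} {y : MTm},
    StepT (t.rename f g) y → ∃ t', StepT t t' ∧ y = t'.rename f g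
  | .var _, _, _, _, h => by cases h
  | .mu m, _, _, _, .mu h => by
      obtain ⟨m', hs, rfl⟩ := StepM.exists_of_rename m h
      exact ⟨.mu m', .mu hs, rfl⟩
  | .muPair m, _, _, _, .muPair h => by
      obtain ⟨m', hs, rfl⟩ := StepM.exists_of_rename m h
      exact ⟨.muPair m', .muPair hs, rfl⟩
  | .injl t, _, _, _, .injl h => by
      obtain ⟨t', hs, rfl⟩ := StepT.exists_of_rename t h
      exact ⟨.injl t', .injl hs, rfl⟩
  | .injr t, _, _, _, .injr h => by
      obtain ⟨t', hs, rfl⟩ := StepT.exists_of_rename t h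
      exact ⟨.injr t', .injr hs, rfl⟩
theorem StepC.exists_of_rename : ∀ (e : MCo) {f g : Nat → Nat} {y : MCo},
    StepC (e.rename f g) y → ∃ e', StepC e e' ∧ y = e'.rename f g
  | .covar _, _, _, _, h => by cases h
  | .cons t e, _, _, _, .consl _ h => by
      obtain ⟨t', hs, rfl⟩ := StepT.exists_of_rename t h
      exact ⟨.cons t' e, .consl _ hs, rfl⟩
  | .cons t e, _, _, _, .consr _ h => by
      obtain ⟨e', hs, rfl⟩ := StepC.exists_of_rename e h
      exact ⟨.cons t e', .consr _ hs, rfl⟩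
  | .mutilde m, _, _, _, .mutilde h => by
      obtain ⟨m', hs, rfl⟩ := StepM.exists_of_rename m h
      exact ⟨.mutilde m', .mutilde hs, rfl⟩
  | .case m₁ m₂, _, _, _, .casel _ h => by
      obtain ⟨m₁', hs, rfl⟩ := StepM.exists_of_rename m₁ h
      exact ⟨.case m₁' m₂, .casel _ hs, rfl⟩
  | .case m₁ m₂, _, _, _, .caser _ h => by
      obtain ⟨m₂', hs, rfl⟩ := StepM.exists_of_rename m₂ h
      exact ⟨.case m₁ m₂', .caser _ hs, rfl⟩
theorem StepM.exists_of_rename : ∀ (m : MMach) {f g : Nat → Nat} {y : MMach},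
    StepM (m.rename f g) y → ∃ m', StepM m m' ∧ y = m'.rename f g
  | .conf t e, f, g, y, h => by
      change StepM (.conf (t.rename f g) (e.rename f g)) y at h
      generalize ht : t.rename f g = t₀ at h
      generalize he : e.rename f g = e₀ at h
      cases h with
      | mu =>
          cases t <;> cases ht
          subst he
          exact ⟨_, .mu _ _, (MMach.rename_substCo ..).symm⟩
      | mutilde =>
          cases e <;> cases he
          subst ht
          exact ⟨_, .mutilde _ _, (MMach.rename_substTm ..).symm⟩
      | muPair =>
          cases t <;> cases ht
          cases e <;> cases he
          exact ⟨_, .muPair _ _ _, (MMach.rename_substTmCo ..).symm⟩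
      | casel =>
          cases t <;> cases ht
          cases e <;> cases he
          exact ⟨_, .casel _ _ _, (MMach.rename_substTm ..).symm⟩
      | caser =>
          cases t <;> cases ht
          cases e <;> cases he
          exact ⟨_, .caser _ _ _, (MMach.rename_substTm ..).symm⟩
      | congT _ hs =>
          subst ht he
          obtain ⟨t', hs', rfl⟩ := StepT.exists_of_rename t hs
          exact ⟨.conf t' e, .congT _ hs', rfl⟩
      | congC _ hs =>
          subst ht he
          obtain ⟨e', hs', rfl⟩ := StepC.exists_of_rename e hs
          exact ⟨.conf t e', .congC _ hs', rfl⟩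
end

namespace Relation

variable {α β : Type*} (r : α → α → Prop)

def IsNormal (a : α) : Prop := ¬∃ b, r a b

def WeaklyNormalizing (a : α) : Prop := ∃ b, ReflTransGen r a b ∧ IsNormal r b

variable {r} {s : β → β → Prop}

theorem WeaklyNormalizing.head {a b : α} (hab : r a b) (hb : WeaklyNormalizing r b) :
    WeaklyNormalizing r a :=
  let ⟨c, hbc, hc⟩ := hb
  ⟨c, .head hab hbc, hc⟩

theorem WeaklyNormalizing.map (f : α → β) (hf : ∀ a b, r a b → s (f a) (f b))
    (hnormal : ∀ a, IsNormal r a → IsNormal s (f a)) {a : α} (h : WeaklyNormalizing r a) :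
    WeaklyNormalizing s (f a) :=
  let ⟨b, hab, hb⟩ := h
  ⟨f b, hab.lift f hf, hnormal b hb⟩

theorem WeaklyNormalizing.of_map {f : α → β} (hf : ∀ a b, r a b → s (f a) (f b))
    (hf_inv : ∀ a c, s (f a) c → ∃ b, r a b ∧ c = f b) {a : α}
    (h : WeaklyNormalizing s (f a)) : WeaklyNormalizing r a := by
  obtain ⟨c, hc, hnc⟩ := h
  suffices ∀ x, ReflTransGen s x c → ∀ a, x = f a → ∃ b, ReflTransGen r a b ∧ c = f b by
    obtain ⟨b, hab, rfl⟩ := this _ hc a rfl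
    exact ⟨b, hab, fun ⟨b', hb'⟩ => hnc ⟨_, hf _ _ hb'⟩⟩
  intro x hx
  induction hx using ReflTransGen.head_induction_on with
  | refl => exact fun a h => ⟨a, .refl, h⟩
  | head hxy _ ih =>
      rintro a rfl
      obtain ⟨b, hab, rfl⟩ := hf_inv _ _ hxy
      obtain ⟨b', hbb', rfl⟩ := ih b rfl
      exact ⟨b', .head hab hbb', rfl⟩

end Relation

open Relation

theorem MTm.isNormal_mu {m : MMach} (h : IsNormal StepM m) : IsNormal StepT (.mu m) :=
  fun ⟨_, .mu hs⟩ => h ⟨_, hs⟩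

theorem MTm.isNormal_muPair {m : MMach} (h : IsNormal StepM m) : IsNormal StepT (.muPair m) :=
  fun ⟨_, .muPair hs⟩ => h ⟨_, hs⟩

theorem MTm.isNormal_injl {t : MTm} (h : IsNormal StepT t) : IsNormal StepT (.injl t) :=
  fun ⟨_, .injl hs⟩ => h ⟨_, hs⟩

theorem MTm.isNormal_injr {t : MTm} (h : IsNormal StepT t) : IsNormal StepT (.injr t) :=
  fun ⟨_, .injr hs⟩ => h ⟨_, hs⟩

theorem MCo.isNormal_covar (k : Nat) : IsNormal StepC (.covar k) := by
  rintro ⟨_, ⟨⟩⟩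

theorem MCo.isNormal_cons {u : MTm} {e : MCo} (hu : IsNormal StepT u) (he : IsNormal StepC e) :
    IsNormal StepC (.cons u e)
  | ⟨_, .consl _ hs⟩ => hu ⟨_, hs⟩
  | ⟨_, .consr _ hs⟩ => he ⟨_, hs⟩

theorem MCo.isNormal_case {m₁ m₂ : MMach} (h₁ : IsNormal StepM m₁)
    (h₂ : IsNormal StepM m₂) : IsNormal StepC (.case m₁ m₂)
  | ⟨_, .casel _ hs⟩ => h₁ ⟨_, hs⟩
  | ⟨_, .caser _ hs⟩ => h₂ ⟨_, hs⟩

theorem MMach.isNormal_conf_covar {t : MTm} (k : Nat) (ht : IsNormal StepT t)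
    (hmu : ∀ m, t ≠ .mu m) : IsNormal StepM (.conf t (.covar k)) := by
  rintro ⟨_, hs⟩
  cases hs with
  | mu m _ => exact hmu m rfl
  | congT _ hs => exact ht ⟨_, hs⟩
  | congC _ hs => cases hs

def MCo.Inert (e : MCo) : Prop := IsNormal StepC e ∧ ∀ m, e ≠ .mutilde m

theorem MCo.inert_covar (k : Nat) : (MCo.covar k).Inert :=
  ⟨isNormal_covar k, nofun⟩

theorem MMach.isNormal_conf_var {e : MCo} (n : Nat) (he : e.Inert) :
    IsNormal StepM (.conf (.var n) e) := by
  rintro ⟨_, hs⟩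
  cases hs with
  | mutilde _ m => exact he.2 m rfl
  | congT _ hs => cases hs
  | congC _ hs => exact he.1 ⟨_, hs⟩

theorem MCo.reflTransGen_cons {u u' : MTm} {e e' : MCo} (hu : ReflTransGen StepT u u')
    (he : ReflTransGen StepC e e') : ReflTransGen StepC (.cons u e) (.cons u' e') :=
  (hu.lift (MCo.cons · e) fun _ _ => .consl e).trans (he.lift (MCo.cons u') fun _ _ => .consr u')

theorem MCo.reflTransGen_case {m₁ m₁' m₂ m₂' : MMach} (h₁ : ReflTransGen StepM m₁ m₁')
    (h₂ : ReflTransGen StepM m₂ m₂') : ReflTransGen StepC (.case m₁ m₂) (.case m₁' m₂') :=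
  (h₁.lift (MCo.case · m₂) fun _ _ => .casel m₂).trans
    (h₂.lift (MCo.case m₁') fun _ _ => .caser m₁')

abbrev Pole : MMach → Prop := WeaklyNormalizing StepM

theorem Pole.of_rename {m : MMach} {f g : Nat → Nat} (h : Pole (m.rename f g)) : Pole m :=
  h.of_map (fun _ _ hs => hs.rename f g) (fun m _ hs => StepM.exists_of_rename m hs)

theorem Pole.muPair_covar {m : MMach} (k : Nat) (h : Pole m) :
    Pole (.conf (.muPair m) (.covar k)) :=
  h.map (fun m => MMach.conf (.muPair m) (.covar k)) (fun _ _ hs => StepM.congT _ (.muPair hs))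
    fun _ hm => MMach.isNormal_conf_covar k (MTm.isNormal_muPair hm) nofun

theorem Pole.injl_covar {t : MTm} (k : Nat) (h : WeaklyNormalizing StepT t) :
    Pole (.conf (.injl t) (.covar k)) :=
  h.map (fun t => MMach.conf (.injl t) (.covar k)) (fun _ _ hs => StepM.congT _ (.injl hs))
    fun _ ht => MMach.isNormal_conf_covar k (MTm.isNormal_injl ht) nofun

theorem Pole.injr_covar {t : MTm} (k : Nat) (h : WeaklyNormalizing StepT t) :
    Pole (.conf (.injr t) (.covar k)) :=
  h.map (fun t => MMach.conf (.injr t) (.covar k)) (fun _ _ hs => StepM.congT _ (.injr hs))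
    fun _ ht => MMach.isNormal_conf_covar k (MTm.isNormal_injr ht) nofun

theorem MTm.weaklyNormalizing_of_pole_covar {t : MTm} {k : Nat}
    (h : Pole (.conf t (.covar k))) : WeaklyNormalizing StepT t := by
  obtain ⟨n, hr, hn⟩ := h
  generalize hx : MMach.conf t (.covar k) = x at hr
  induction hr using ReflTransGen.head_induction_on generalizing t with
  | refl =>
      subst hx
      exact ⟨t, .refl, fun ⟨_, hs⟩ => hn ⟨_, .congT _ hs⟩⟩
  | head hs hr ih =>
      subst hx
      cases hs with
      | mu m _ =>
          have hm : Pole (m.substCo (.covar k)) := ⟨n, hr, hn⟩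
          rw [MMach.substCo_covar] at hm
          exact hm.of_rename.map MTm.mu (fun _ _ => .mu) fun _ => isNormal_mu
      | congT _ hs => exact (ih rfl).head hs
      | congC _ hs => cases hs

/-- The top-level co-variable `α` (index `0`) refutes every type, so that truth implies
normalization. The inner hypotheses on `u` spell out `Truth A u`, defined next. -/
def Falsity : Ty → MCo → Prop
  | .base, e => e = .covar 0
  | .arrow A B, e => e = .covar 0 ∨ ∃ u e', e = .cons u e' ∧
      (∀ (f g : Nat → Nat) d, Falsity A d → Pole (.conf (u.rename f g) d)) ∧ Falsity B e'
  | .sum A B, e => e = .covar 0 ∨ ∃ m₁ m₂, e = .case m₁ m₂ ∧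
      (∀ u, (∀ (f g : Nat → Nat) d, Falsity A d → Pole (.conf (u.rename f g) d)) →
        Pole (m₁.substTm u)) ∧
      (∀ u, (∀ (f g : Nat → Nat) d, Falsity B d → Pole (.conf (u.rename f g) d)) →
        Pole (m₂.substTm u))

/-- Truth is asked of every renaming of `t`, so that it survives being pushed under binders. -/
def Truth (A : Ty) (t : MTm) : Prop :=
  ∀ (f g : Nat → Nat) e, Falsity A e → Pole (.conf (t.rename f g) e)

theorem falsity_covar_zero : ∀ A : Ty, Falsity A (.covar 0)
  | .base => rfl
  | .arrow .. => .inl rfl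
  | .sum .. => .inl rfl

namespace Truth

variable {A : Ty} {t : MTm}

theorem rename (h : Truth A t) (f g : Nat → Nat) : Truth A (t.rename f g) := by
  intro f' g' e he
  rw [MTm.rename_rename]
  exact h _ _ e he

theorem pole (h : Truth A t) {e : MCo} (he : Falsity A e) : Pole (.conf t e) := by
  simpa only [MTm.rename_id] using h id id e he

theorem weaklyNormalizing (h : Truth A t) : WeaklyNormalizing StepT t :=
  MTm.weaklyNormalizing_of_pole_covar (h.pole (falsity_covar_zero A))

end Truth

theorem truth_var_of_exists_inert {A : Ty}
    (hA : ∀ e, Falsity A e → ∃ e', ReflTransGen StepC e e' ∧ e'.Inert) (n : Nat) :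
    Truth A (.var n) := by
  intro f _ e he
  obtain ⟨e', hee', he'⟩ := hA e he
  exact ⟨_, hee'.lift (MMach.conf _) (fun _ _ => .congC _), MMach.isNormal_conf_var (f n) he'⟩

theorem Falsity.exists_inert {A : Ty} {e : MCo} (he : Falsity A e) :
    ∃ e', ReflTransGen StepC e e' ∧ e'.Inert := by
  induction A generalizing e with
  | base => subst he; exact ⟨_, .refl, MCo.inert_covar 0⟩
  | arrow A B _ ihB =>
      rcases he with rfl | ⟨u, e', rfl, hu, he'⟩
      · exact ⟨_, .refl, MCo.inert_covar 0⟩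
      · obtain ⟨u', hu', hnu⟩ := Truth.weaklyNormalizing hu
        obtain ⟨e'', he'', hne, -⟩ := ihB he'
        exact ⟨.cons u' e'', MCo.reflTransGen_cons hu' he'', MCo.isNormal_cons hnu hne, nofun⟩
  | sum A B ihA ihB =>
      rcases he with rfl | ⟨m₁, m₂, rfl, h₁, h₂⟩
      · exact ⟨_, .refl, MCo.inert_covar 0⟩
      · obtain ⟨m₁', hm₁, hn₁⟩ := Pole.of_rename (f := Nat.pred) (g := id)
          (m₁.substTm_var_zero ▸ h₁ _ (truth_var_of_exists_inert (fun _ => ihA) 0))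
        obtain ⟨m₂', hm₂, hn₂⟩ := Pole.of_rename (f := Nat.pred) (g := id)
          (m₂.substTm_var_zero ▸ h₂ _ (truth_var_of_exists_inert (fun _ => ihB) 0))
        exact ⟨.case m₁' m₂', MCo.reflTransGen_case hm₁ hm₂, MCo.isNormal_case hn₁ hn₂,
          nofun⟩

theorem truth_var (A : Ty) (n : Nat) : Truth A (.var n) :=
  truth_var_of_exists_inert (fun _ => Falsity.exists_inert) n

def SubstTruth (Γ : List Ty) (σt : Nat → MTm) : Prop :=
  ∀ n A, Γ[n]? = some A → Truth A (σt n)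

namespace SubstTruth

variable {Γ : List Ty} {σt : Nat → MTm}

theorem cons {A : Ty} {u : MTm} (hu : Truth A u) (hσ : SubstTruth Γ σt) :
    SubstTruth (A :: Γ) (consT u σt)
  | 0, _, h => by cases h; exact hu
  | n + 1, B, h => hσ n B h

theorem rename (hσ : SubstTruth Γ σt) (f g : Nat → Nat) :
    SubstTruth Γ (fun n => (σt n).rename f g) :=
  fun n A h => (hσ n A h).rename f g

theorem up (hσ : SubstTruth Γ σt) (A : Ty) (σc : Nat → MCo) :
    SubstTruth (A :: Γ) (upT (upC σt σc).1 (upC σt σc).2).1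
  | 0, _, h => by cases h; exact truth_var A 0
  | n + 1, B, h => ((hσ n B h).rename id Nat.succ).rename Nat.succ id

end SubstTruth

def SemTyped (Γ : List Ty) (s : MTm) (A : Ty) : Prop :=
  ∀ σt σc, SubstTruth Γ σt → ∀ e, Falsity A e → Pole (.conf (s.subst σt σc) e)

namespace SemTyped

variable {Γ : List Ty} {s : MTm} {A B : Ty}

theorem truth (h : SemTyped Γ s A) {σt : Nat → MTm} (hσ : SubstTruth Γ σt)
    (σc : Nat → MCo) :
    Truth A (s.subst σt σc) := by
  intro f g e he
  rw [MTm.rename_subst]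
  exact h _ _ (hσ.rename f g) e he

theorem var {n : Nat} (h : Γ[n]? = some A) : SemTyped Γ (.var n) A :=
  fun _ _ hσ _ he => (hσ n A h).pole he

theorem lam (h : SemTyped (A :: Γ) s B) :
    SemTyped Γ (.muPair (.conf s (.covar 0))) (.arrow A B) := by
  intro σt σc hσ e he
  rcases he with rfl | ⟨u, e', rfl, hu, he'⟩
  · exact Pole.muPair_covar 0 (h _ _ (hσ.up A σc) _ (falsity_covar_zero B))
  · refine WeaklyNormalizing.head (.muPair _ u e') ?_
    rw [MMach.substTmCo_upT_upC]
    exact h _ _ (hσ.cons hu) e' he'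

theorem app {u : MTm} (hs : SemTyped Γ s (.arrow A B)) (hu : SemTyped Γ u A) :
    SemTyped Γ (.mu (.conf s (.cons u (.covar 0)))) B := by
  intro σt σc hσ e he
  refine WeaklyNormalizing.head (.mu _ e) ?_
  rw [MMach.substCo_upC]
  exact hs _ _ hσ _ (.inr ⟨_, _, rfl, hu.truth hσ _, he⟩)

theorem injl (h : SemTyped Γ s A) : SemTyped Γ (.injl s) (.sum A B) := by
  intro σt σc hσ e he
  rcases he with rfl | ⟨m₁, m₂, rfl, h₁, -⟩
  · exact Pole.injl_covar 0 (h.truth hσ σc).weaklyNormalizing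
  · exact WeaklyNormalizing.head (.casel _ m₁ m₂) (h₁ _ (h.truth hσ σc))

theorem injr (h : SemTyped Γ s B) : SemTyped Γ (.injr s) (.sum A B) := by
  intro σt σc hσ e he
  rcases he with rfl | ⟨m₁, m₂, rfl, -, h₂⟩
  · exact Pole.injr_covar 0 (h.truth hσ σc).weaklyNormalizing
  · exact WeaklyNormalizing.head (.caser _ m₁ m₂) (h₂ _ (h.truth hσ σc))

theorem case {s₁ s₂ : MTm} {C : Ty} (hs : SemTyped Γ s (.sum A B))
    (h₁ : SemTyped (A :: Γ) s₁ C) (h₂ : SemTyped (B :: Γ) s₂ C) :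
    SemTyped Γ (.mu (.conf s (.case (.conf s₁ (.covar 0)) (.conf s₂ (.covar 0))))) C := by
  intro σt σc hσ e he
  refine WeaklyNormalizing.head (.mu _ e) ?_
  rw [MMach.substCo_upC]
  refine hs _ _ hσ _ (.inr ⟨_, _, rfl, fun u hu => ?_, fun u hu => ?_⟩)
  · rw [MMach.substTm_upT]
    exact h₁ _ _ (hσ.cons hu) e he
  · rw [MMach.substTm_upT]
    exact h₂ _ _ (hσ.cons hu) e he

end SemTyped

theorem adequacy {Γ : List Ty} {t : LTm} {A : Ty} (ht : HasTy Γ t A) :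
    SemTyped Γ (transl t) A := by
  induction ht with
  | var h => exact .var h
  | lam _ ih => exact ih.lam
  | app _ _ ihs ihu => exact ihs.app ihu
  | injl _ ih => exact ih.injl
  | injr _ ih => exact ih.injr
  | case _ _ _ ihs ih₁ ih₂ => exact ihs.case ih₁ ih₂

/-- Weak normalization of the simply-typed λ-calculus with sums: for every
closed well-typed term ⊢ t : A, the μμ̃ configuration ⟨⟦t⟧ | α⟩ reduces to a
normal configuration. -/
theorem weak_normalization {t : LTm} {A : Ty} (ht : HasTy [] t A) :
    ∃ m : MMach, Relation.ReflTransGen StepM (.conf (transl t) (.covar 0)) m ∧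
      ¬∃ m', StepM m m' := by
  have h := adequacy ht MTm.var MCo.covar (fun _ _ h => by simp at h) _ (falsity_covar_zero A)
  rwa [MTm.subst_var] at h
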